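/- arXiv:1909.01690 — 2 statements merged into one kernel-verified Lean document; each statement's English description precedes it below -/
import Mathlib

section
/- Let X, Y be two-dimensional real normed spaces, T : X → Y linear with ‖T‖ = 1, and suppose M_T ∩ Ext(B_X) = {±x_1, ±x_2, ±x_3} with x_1, x_2, x_3 pairwise distinct up to sign. If T x_i is a smooth point of Y for each i = 1,2,3, then dim span J(T) = 3, i.e., T is 3-smooth. -/
/-!
Let `fᵢ` be the unique norm-one functional supporting `T xᵢ`; the rank-one functionals
`Fᵢ = fᵢ ⊗ xᵢ : S ↦ fᵢ (S xᵢ)` lie in `J(T)`, and the claim is that they are linearly independent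
and span `J(T)`.

Spanning: let `S` satisfy `fᵢ (S xᵢ) = 0` for all `i`. For a norming pair `(v, g)` of `T`
(`‖v‖, ‖g‖ ≤ 1`, `g (T v) = 1`), the face of the unit ball exposed by `g ∘ T` is the closed convex
hull of its extreme points (Krein–Milman); these lie among the `±xᵢ`, where smoothness forces
`g = ±fᵢ`, so `g (S v) = 0`. A compactness argument over norming pairs then gives
`‖T + δ S‖ ≤ 1 + δ ε` for some `δ > 0` and any `ε > 0`, so every `F ∈ J(T)` has `F S ≤ 0`, and by
symmetry `F S = 0`. Hence `J(T)` vanishes on the common kernel of the `Fᵢ`.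

Independence: testing a relation `∑ cᵢ Fᵢ = 0` on rank-one operators `g ⊗ y` with `g xⱼ = 0` shows
that `c₁ ≠ 0` would make `f₁` proportional to both `f₂` and `f₃`; then `f₁ ∘ T` would equal `1` at
three distinct extreme points `x₁, ±x₂, ±x₃`, which lie on a line in the plane, and a line contains
at most two extreme points.
-/

open Module Set Metric

section RealVectorSpace

variable {E : Type*} [AddCommGroup E] [Module ℝ E]

theorem IsCompact.subset_of_extremePoints_subset [TopologicalSpace E] [T2Space E]
    [IsTopologicalAddGroup E] [ContinuousSMul ℝ E] [LocallyConvexSpace ℝ E] {s t : Set E}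
    (hs : IsCompact s) (hsc : Convex ℝ s) (ht : IsClosed t) (htc : Convex ℝ t)
    (h : s.extremePoints ℝ ⊆ t) : s ⊆ t := by
  rw [← closure_convexHull_extremePoints hs hsc]
  exact closure_minimal (convexHull_min h htc) ht

theorem eq_or_eq_or_eq_of_collinear_of_mem_extremePoints {A : Set E} {x y z : E}
    (hcol : Collinear ℝ {x, y, z}) (hx : x ∈ A.extremePoints ℝ) (hy : y ∈ A.extremePoints ℝ)
    (hz : z ∈ A.extremePoints ℝ) : x = y ∨ x = z ∨ y = z := by
  rcases hcol.wbtw_or_wbtw_or_wbtw with h | h | h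
  · have := (mem_extremePoints_iff_forall_segment.1 hy).2 x hx.1 z hz.1 (mem_segment_iff_wbtw.2 h)
    tauto
  · have := (mem_extremePoints_iff_forall_segment.1 hz).2 y hy.1 x hx.1 (mem_segment_iff_wbtw.2 h)
    tauto
  · have := (mem_extremePoints_iff_forall_segment.1 hx).2 z hz.1 y hy.1 (mem_segment_iff_wbtw.2 h)
    tauto

theorem collinear_setOf_apply_eq (hE : finrank ℝ E = 2) {ℓ : Module.Dual ℝ E} (hℓ : ℓ ≠ 0)
    (c : ℝ) : Collinear ℝ {x | ℓ x = c} := by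
  have : FiniteDimensional ℝ E := .of_finrank_eq_succ hE
  have hker : finrank ℝ (LinearMap.ker ℓ) = 1 := by
    have := Module.Dual.finrank_ker_add_one_of_ne_zero hℓ
    omega
  have hle : vectorSpan ℝ {x | ℓ x = c} ≤ LinearMap.ker ℓ := by
    rw [vectorSpan_def, Submodule.span_le]
    rintro _ ⟨a, ha, b, hb, rfl⟩
    simp_all
  rw [collinear_iff_finrank_le_one, ← hker]
  exact Submodule.finrank_mono hle

theorem eq_or_eq_or_eq_of_mem_extremePoints_of_apply_eq_one (hE : finrank ℝ E = 2)
    {A : Set E} {ℓ : Module.Dual ℝ E} {x y z : E} (hx : x ∈ A.extremePoints ℝ)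
    (hy : y ∈ A.extremePoints ℝ) (hz : z ∈ A.extremePoints ℝ)
    (hℓx : ℓ x = 1) (hℓy : ℓ y = 1) (hℓz : ℓ z = 1) : x = y ∨ x = z ∨ y = z := by
  have hℓ : ℓ ≠ 0 := fun h => by simp [h] at hℓx
  refine eq_or_eq_or_eq_of_collinear_of_mem_extremePoints
    ((collinear_setOf_apply_eq hE hℓ 1).subset ?_) hx hy hz
  rintro w (rfl | rfl | rfl) <;> assumption

theorem mem_span_singleton_of_smul_add_smul_eq_zero {u w : E} {a b : ℝ} (ha : a ≠ 0)
    (h : a • u + b • w = 0) : u ∈ ℝ ∙ w := by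
  rw [← Submodule.smul_mem_iff _ ha, eq_neg_of_add_eq_zero_left h]
  exact Submodule.neg_mem _ (Submodule.smul_mem _ _ (Submodule.mem_span_singleton_self w))

end RealVectorSpace

theorem finrank_span_eq_card_of_forall_apply_eq_zero {𝕜 V ι : Type*} [NontriviallyNormedField 𝕜]
    [NormedAddCommGroup V] [NormedSpace 𝕜 V] [Fintype ι] {J : Set (StrongDual 𝕜 V)}
    {F : ι → StrongDual 𝕜 V} (hF : LinearIndependent 𝕜 F) (hFJ : ∀ i, F i ∈ J)
    (hJ : ∀ G ∈ J, ∀ S, (∀ i, F i S = 0) → G S = 0) :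
    finrank 𝕜 (Submodule.span 𝕜 J) = Fintype.card ι := by
  suffices Submodule.span 𝕜 J = Submodule.span 𝕜 (range F) by
    rw [this, finrank_span_eq_card hF]
  refine le_antisymm (Submodule.span_le.2 fun G hG => ?_)
    (Submodule.span_mono (range_subset_iff.2 hFJ))
  have hker : ⨅ i, LinearMap.ker (F i : V →ₗ[𝕜] 𝕜) ≤ LinearMap.ker (G : V →ₗ[𝕜] 𝕜) :=
    fun S hS => hJ G hG S fun i => Submodule.mem_iInf _ |>.1 hS i
  obtain ⟨c, hc⟩ := (Submodule.mem_span_range_iff_exists_fun 𝕜).1 (mem_span_of_iInf_ker_le_ker hker)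
  refine (Submodule.mem_span_range_iff_exists_fun 𝕜).2 ⟨c, ContinuousLinearMap.ext fun S => ?_⟩
  simpa using congrArg (· S) hc

theorem IsCompact.exists_pos_forall_add_mul_le {α : Type*} [TopologicalSpace α] {K : Set α}
    (hK : IsCompact K) {Φ Ψ : α → ℝ} (hΦ : Continuous Φ) (hΨ : Continuous Ψ)
    (hΦK : ∀ k ∈ K, Φ k ≤ 1) (hΨK : ∀ k ∈ K, Φ k = 1 → Ψ k ≤ 0) {ε : ℝ} (hε : 0 < ε) :
    ∃ δ > 0, ∀ k ∈ K, Φ k + δ * Ψ k ≤ 1 + δ * ε := by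
  obtain ⟨M, hM⟩ := hK.bddAbove_image hΨ.continuousOn
  have hMK : ∀ k ∈ K, Ψ k ≤ max M 1 := fun k hk => (hM ⟨k, hk, rfl⟩).trans (le_max_left _ _)
  have hMpos : 0 < max M 1 := lt_max_of_lt_right one_pos
  -- Where `Ψ ≥ ε` (a compact set) `Φ` stays below `1 - η`; elsewhere any `δ` works.
  obtain ⟨η, hη, hΦη⟩ : ∃ η > 0, ∀ k ∈ K, ε ≤ Ψ k → Φ k ≤ 1 - η := by
    set K' := K ∩ {k | ε ≤ Ψ k}
    rcases K'.eq_empty_or_nonempty with hK' | hK'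
    · exact ⟨1, one_pos, fun k hk hkε => (hK'.subset ⟨hk, hkε⟩ : k ∈ (∅ : Set α)).elim⟩
    obtain ⟨k₀, ⟨hk₀, hk₀ε : ε ≤ Ψ k₀⟩, hmax⟩ :=
      (hK.inter_right (isClosed_le continuous_const hΨ)).exists_isMaxOn hK' hΦ.continuousOn
    have hk₀1 : Φ k₀ < 1 :=
      (hΦK k₀ hk₀).lt_of_ne fun h => by linarith [hΨK k₀ hk₀ h]
    exact ⟨1 - Φ k₀, by linarith, fun k hk hkε => by linarith [isMaxOn_iff.1 hmax k ⟨hk, hkε⟩]⟩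
  refine ⟨η / max M 1, by positivity, fun k hk => ?_⟩
  by_cases hkε : ε ≤ Ψ k
  · have hδΨ : η / max M 1 * Ψ k ≤ η := by
      rw [div_mul_eq_mul_div, div_le_iff₀ hMpos]
      exact mul_le_mul_of_nonneg_left (hMK k hk) hη.le
    nlinarith [hΦη k hk hkε, div_pos hη hMpos]
  · nlinarith [hΦK k hk, div_pos hη hMpos]

section RealNormedSpace

variable {E : Type*} [NormedAddCommGroup E] [NormedSpace ℝ E]

theorem eq_or_eq_neg_of_mem_span_singleton {u w : E} (h : u ∈ ℝ ∙ w) (hnorm : ‖u‖ = ‖w‖)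
    (hw : w ≠ 0) : u = w ∨ u = -w := by
  obtain ⟨a, rfl⟩ := Submodule.mem_span_singleton.1 h
  rw [norm_smul, Real.norm_eq_abs, mul_eq_right₀ (norm_ne_zero_iff.2 hw)] at hnorm
  rcases (abs_eq zero_le_one).1 hnorm with rfl | rfl <;> simp

theorem exists_strongDual_apply_eq_zero_iff (hE : finrank ℝ E = 2) {a : E} (ha : a ≠ 0) :
    ∃ g : StrongDual ℝ E, ∀ x, g x = 0 ↔ x ∈ ℝ ∙ a := by
  have : FiniteDimensional ℝ E := .of_finrank_eq_succ hE
  have hq : finrank ℝ (E ⧸ ℝ ∙ a) = finrank ℝ ℝ := by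
    have := (ℝ ∙ a).finrank_quotient_add_finrank
    rw [finrank_span_singleton ha, hE] at this
    rw [finrank_self]
    omega
  let e := LinearEquiv.ofFinrankEq _ _ hq
  exact ⟨LinearMap.toContinuousLinearMap (e.toLinearMap ∘ₗ (ℝ ∙ a).mkQ), fun x => by simp⟩

theorem StrongDual.norm_eq_one_of_apply_eq_one {g : StrongDual ℝ E} (hg : ‖g‖ ≤ 1) {y : E}
    (hy : ‖y‖ ≤ 1) (h : g y = 1) : ‖g‖ = 1 ∧ ‖y‖ = 1 := by
  have := g.le_opNorm y
  rw [h, norm_one] at this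
  constructor <;> nlinarith [norm_nonneg g, norm_nonneg y]

theorem StrongDual.apply_eq_zero_of_unique {y z : E} {f g : StrongDual ℝ E}
    (hf : ∀ g : StrongDual ℝ E, ‖g‖ = 1 ∧ g y = 1 → g = f) (hfz : f z = 0) (hg : ‖g‖ = 1)
    (hgy : g y = 1 ∨ g y = -1) : g z = 0 := by
  rcases hgy with hgy | hgy
  · rw [hf g ⟨hg, hgy⟩, hfz]
  · have := hf (-g) ⟨by rw [norm_neg, hg], by simp [hgy]⟩
    rw [neg_eq_iff_eq_neg] at this
    simp [this, hfz]

end RealNormedSpace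

section Operators

variable {X Y : Type*} [NormedAddCommGroup X] [NormedSpace ℝ X]
  [NormedAddCommGroup Y] [NormedSpace ℝ Y]

theorem StrongDual.apply_comp_le_one {g : StrongDual ℝ Y} (hg : ‖g‖ ≤ 1) {T : X →L[ℝ] Y}
    (hT : ‖T‖ ≤ 1) {v : X} (hv : ‖v‖ ≤ 1) : g (T v) ≤ 1 :=
  calc g (T v) ≤ ‖g‖ * (‖T‖ * ‖v‖) :=
        (le_abs_self _).trans ((g.le_opNorm _).trans (by gcongr; exact T.le_opNorm v))
    _ ≤ 1 := mul_le_one₀ hg (by positivity) (mul_le_one₀ hT (norm_nonneg _) hv)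

theorem apply_eq_zero_of_forall_extremePoints [FiniteDimensional ℝ X] {T S : X →L[ℝ] Y}
    (hT : ‖T‖ ≤ 1) {g : StrongDual ℝ Y} (hg : ‖g‖ ≤ 1)
    (hS : ∀ w ∈ (closedBall (0 : X) 1).extremePoints ℝ, g (T w) = 1 → g (S w) = 0)
    {v : X} (hv : ‖v‖ ≤ 1) (hgv : g (T v) = 1) : g (S v) = 0 := by
  have hle : ∀ w ∈ closedBall (0 : X) 1, g (T w) ≤ 1 := fun w hw =>
    StrongDual.apply_comp_le_one hg hT (mem_closedBall_zero_iff.1 hw)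
  have hC := ContinuousLinearMap.toExposed.isExposed (l := g ∘L T) (A := closedBall (0 : X) 1)
  have hvC : v ∈ (g ∘L T).toExposed (closedBall 0 1) :=
    ⟨mem_closedBall_zero_iff.2 hv, fun w hw => by simpa [hgv] using hle w hw⟩
  refine (hC.isCompact (isCompact_closedBall 0 1)).subset_of_extremePoints_subset
    (hC.convex (convex_closedBall 0 1)) (g ∘L S).isClosed_ker
    (LinearMap.ker (g ∘L S : X →ₗ[ℝ] ℝ)).convex
    (fun w hw => ?_) hvC
  have hw1 : g (T w) = 1 := le_antisymm (hle w hw.1.1) (by simpa [hgv] using hw.1.2 v hvC.1)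
  exact hS w (hC.isExtreme.extremePoints_subset_extremePoints hw) hw1

theorem apply_nonpos_of_forall_norming_pair [FiniteDimensional ℝ X] [FiniteDimensional ℝ Y]
    {T S : X →L[ℝ] Y} (hT : ‖T‖ ≤ 1)
    (hS : ∀ v : X, ‖v‖ ≤ 1 → ∀ g : StrongDual ℝ Y, ‖g‖ ≤ 1 → g (T v) = 1 → g (S v) ≤ 0)
    {F : StrongDual ℝ (X →L[ℝ] Y)} (hF : ‖F‖ ≤ 1) (hFT : F T = 1) : F S ≤ 0 := by
  by_contra! hFS
  have hK := (isCompact_closedBall (0 : X) 1).prod (isCompact_closedBall (0 : StrongDual ℝ Y) 1)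
  obtain ⟨δ, hδ, hle⟩ := hK.exists_pos_forall_add_mul_le (Φ := fun p => p.2 (T p.1))
    (Ψ := fun p => p.2 (S p.1)) (by fun_prop) (by fun_prop)
    (fun p hp => StrongDual.apply_comp_le_one (mem_closedBall_zero_iff.1 hp.2) hT
      (mem_closedBall_zero_iff.1 hp.1))
    (fun p hp h => hS p.1 (mem_closedBall_zero_iff.1 hp.1) p.2 (mem_closedBall_zero_iff.1 hp.2) h)
    (half_pos hFS)
  have hnorm : ‖T + δ • S‖ ≤ 1 + δ * (F S / 2) := by
    refine ContinuousLinearMap.opNorm_le_of_unit_norm (by positivity) fun v hv => ?_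
    obtain ⟨g, hg, hgv⟩ := exists_dual_vector'' ℝ ((T + δ • S) v)
    have := hle (v, g) ⟨by simp [hv], by simpa using hg⟩
    simp only [add_apply, smul_apply, map_add, map_smul, smul_eq_mul, RCLike.ofReal_real_eq_id,
      id] at hgv this ⊢
    linarith
  have hFδ : F (T + δ • S) = 1 + δ * F S := by simp [hFT]
  have hFle : F (T + δ • S) ≤ ‖T + δ • S‖ :=
    (le_abs_self _).trans ((F.le_opNorm _).trans (mul_le_of_le_one_left (norm_nonneg _) hF))
  nlinarith [mul_pos hδ hFS]

theorem apply_eq_zero_of_forall_norming_extremePoints [FiniteDimensional ℝ X]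
    [FiniteDimensional ℝ Y] {T S : X →L[ℝ] Y} (hT : ‖T‖ ≤ 1)
    (hS : ∀ w ∈ (closedBall (0 : X) 1).extremePoints ℝ, ∀ g : StrongDual ℝ Y, ‖g‖ ≤ 1 →
      g (T w) = 1 → g (S w) = 0)
    {F : StrongDual ℝ (X →L[ℝ] Y)} (hF : ‖F‖ ≤ 1) (hFT : F T = 1) : F S = 0 := by
  have hS' : ∀ v : X, ‖v‖ ≤ 1 → ∀ g : StrongDual ℝ Y, ‖g‖ ≤ 1 → g (T v) = 1 → g (S v) = 0 :=
    fun v hv g hg hgv =>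
      apply_eq_zero_of_forall_extremePoints hT hg (fun w hw => hS w hw g hg) hv hgv
  refine le_antisymm (apply_nonpos_of_forall_norming_pair hT
    (fun v hv g hg hgv => (hS' v hv g hg hgv).le) hF hFT) ?_
  simpa using apply_nonpos_of_forall_norming_pair (S := -S) hT
    (fun v hv g hg hgv => by simp [hS' v hv g hg hgv]) hF hFT

/-- The functional `f ⊗ x` of the paper. -/
noncomputable def dualTensor (f : StrongDual ℝ Y) (x : X) : StrongDual ℝ (X →L[ℝ] Y) :=
  f ∘L ContinuousLinearMap.apply ℝ Y x

@[simp]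
theorem dualTensor_apply (f : StrongDual ℝ Y) (x : X) (S : X →L[ℝ] Y) :
    dualTensor f x S = f (S x) :=
  rfl

theorem norm_dualTensor_le (f : StrongDual ℝ Y) (x : X) : ‖dualTensor f x‖ ≤ ‖f‖ * ‖x‖ :=
  ContinuousLinearMap.opNorm_le_bound _ (by positivity) fun S =>
    calc ‖f (S x)‖ ≤ ‖f‖ * (‖S‖ * ‖x‖) := (f.le_opNorm _).trans (by gcongr; exact S.le_opNorm x)
      _ = ‖f‖ * ‖x‖ * ‖S‖ := by ring

theorem norm_dualTensor_eq_one {T : X →L[ℝ] Y} (hT : ‖T‖ ≤ 1) {f : StrongDual ℝ Y} (hf : ‖f‖ = 1)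
    {x : X} (hx : ‖x‖ = 1) (hfx : f (T x) = 1) : ‖dualTensor f x‖ = 1 :=
  (StrongDual.norm_eq_one_of_apply_eq_one ((norm_dualTensor_le f x).trans (by rw [hf, hx, one_mul]))
    hT hfx).1

theorem apply_eq_zero_of_dualTensor_apply_eq_zero [FiniteDimensional ℝ X] [FiniteDimensional ℝ Y]
    {ι : Type*} {T S : X →L[ℝ] Y} (hT : ‖T‖ ≤ 1) {x : ι → X} {f : ι → StrongDual ℝ Y}
    (hf : ∀ i, ∀ g : StrongDual ℝ Y, ‖g‖ = 1 ∧ g (T (x i)) = 1 → g = f i)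
    (hM : ∀ w ∈ (closedBall (0 : X) 1).extremePoints ℝ, ‖w‖ = 1 → ‖T w‖ = 1 →
      ∃ i, w = x i ∨ w = -x i)
    (hS : ∀ i, dualTensor (f i) (x i) S = 0) {F : StrongDual ℝ (X →L[ℝ] Y)} (hF : ‖F‖ ≤ 1)
    (hFT : F T = 1) : F S = 0 := by
  refine apply_eq_zero_of_forall_norming_extremePoints hT (fun w hw g hg hgw => ?_) hF hFT
  have hw1 := mem_closedBall_zero_iff.1 hw.1
  have hTw : ‖T w‖ ≤ ‖w‖ := (T.le_opNorm w).trans (mul_le_of_le_one_left (norm_nonneg _) hT)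
  obtain ⟨hg1, hTw1⟩ := StrongDual.norm_eq_one_of_apply_eq_one hg (hTw.trans hw1) hgw
  obtain ⟨i, rfl | rfl⟩ := hM w hw (le_antisymm hw1 (hTw1 ▸ hTw)) hTw1
  · exact StrongDual.apply_eq_zero_of_unique (hf i) (hS i) hg1 (.inl hgw)
  · simpa using StrongDual.apply_eq_zero_of_unique (hf i) (hS i) hg1
      (.inr (by simp only [map_neg] at hgw; linarith))

theorem linearIndependent_dualTensor (hX : finrank ℝ X = 2) {x₁ x₂ x₃ : X}
    (h₁₂ : x₁ ∉ ℝ ∙ x₂) (h₃₂ : x₃ ∉ ℝ ∙ x₂) (h₁₃ : x₁ ∉ ℝ ∙ x₃) (h₂₃ : x₂ ∉ ℝ ∙ x₃)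
    {f₁ f₂ f₃ : StrongDual ℝ Y} (hf₂ : f₂ ≠ 0) (hf₃ : f₃ ≠ 0) (hf : ¬(f₁ ∈ ℝ ∙ f₂ ∧ f₁ ∈ ℝ ∙ f₃)) :
    LinearIndependent ℝ ![dualTensor f₁ x₁, dualTensor f₂ x₂, dualTensor f₃ x₃] := by
  rw [Fintype.linearIndependent_iff]
  intro c hc
  have hcomb : ∀ g : StrongDual ℝ X,
      (c 0 * g x₁) • f₁ + (c 1 * g x₂) • f₂ + (c 2 * g x₃) • f₃ = 0 := fun g => by
    ext y
    simpa [Fin.sum_univ_three, mul_assoc] using congrArg (· (g.smulRight y)) hc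
  obtain ⟨g₂, hg₂⟩ := exists_strongDual_apply_eq_zero_iff hX (a := x₂)
    fun h => h₂₃ (h ▸ Submodule.zero_mem _)
  obtain ⟨g₃, hg₃⟩ := exists_strongDual_apply_eq_zero_iff hX (a := x₃)
    fun h => h₃₂ (h ▸ Submodule.zero_mem _)
  have h₂ := hcomb g₂
  have h₃ := hcomb g₃
  rw [(hg₂ x₂).2 (Submodule.mem_span_singleton_self x₂), mul_zero, zero_smul, add_zero] at h₂
  rw [(hg₃ x₃).2 (Submodule.mem_span_singleton_self x₃), mul_zero, zero_smul, add_zero] at h₃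
  have hc₀ : c 0 = 0 := by
    by_contra hc₀
    exact hf ⟨mem_span_singleton_of_smul_add_smul_eq_zero
        (mul_ne_zero hc₀ (mt (hg₃ x₁).1 h₁₃)) h₃,
      mem_span_singleton_of_smul_add_smul_eq_zero (mul_ne_zero hc₀ (mt (hg₂ x₁).1 h₁₂)) h₂⟩
  rw [hc₀, zero_mul, zero_smul, zero_add] at h₂ h₃
  have hc₁ : c 1 = 0 := by simpa [hf₂, mt (hg₃ x₂).1 h₂₃] using h₃
  have hc₂ : c 2 = 0 := by simpa [hf₃, mt (hg₂ x₃).1 h₃₂] using h₂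
  intro i
  fin_cases i <;> assumption

theorem linearIndependent_dualTensor_of_mem_extremePoints (hX : finrank ℝ X = 2)
    {T : X →L[ℝ] Y} {x₁ x₂ x₃ : X}
    (hdist : x₁ ≠ x₂ ∧ x₁ ≠ -x₂ ∧ x₁ ≠ x₃ ∧ x₁ ≠ -x₃ ∧ x₂ ≠ x₃ ∧ x₂ ≠ -x₃)
    (hx : ∀ w ∈ ({x₁, -x₁, x₂, -x₂, x₃, -x₃} : Set X),
      ‖w‖ = 1 ∧ w ∈ (closedBall (0 : X) 1).extremePoints ℝ)
    {f₁ f₂ f₃ : StrongDual ℝ Y} (hf₁ : ‖f₁‖ = 1 ∧ f₁ (T x₁) = 1) (hf₂ : ‖f₂‖ = 1 ∧ f₂ (T x₂) = 1)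
    (hf₃ : ‖f₃‖ = 1 ∧ f₃ (T x₃) = 1) :
    LinearIndependent ℝ ![dualTensor f₁ x₁, dualTensor f₂ x₂, dualTensor f₃ x₃] := by
  obtain ⟨h₁₂, h₁₂', h₁₃, h₁₃', h₂₃, h₂₃'⟩ := hdist
  have hx₁ := (hx x₁ (by simp)).1
  have hx₂ := (hx x₂ (by simp)).1
  have hx₃ := (hx x₃ (by simp)).1
  have hpar {u w : X} (hu : ‖u‖ = 1) (hw : ‖w‖ = 1) (h : u ≠ w) (h' : u ≠ -w) : u ∉ ℝ ∙ w :=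
    fun hmem => (eq_or_eq_neg_of_mem_span_singleton hmem (hu.trans hw.symm)
      (norm_ne_zero_iff.1 (by rw [hw]; exact one_ne_zero))).elim h h'
  have hne {g : StrongDual ℝ Y} (hg : ‖g‖ = 1) : g ≠ 0 := norm_ne_zero_iff.1 (by simp [hg])
  have hsupp {g : StrongDual ℝ Y} {x : X} (hg : ‖g‖ = 1 ∧ g (T x) = 1) (h : f₁ ∈ ℝ ∙ g) :
      ∃ w, (w = x ∨ w = -x) ∧ f₁ (T w) = 1 := by
    rcases eq_or_eq_neg_of_mem_span_singleton h (by rw [hf₁.1, hg.1]) (hne hg.1) with h | h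
    · exact ⟨x, .inl rfl, h ▸ hg.2⟩
    · exact ⟨-x, .inr rfl, by simp [h, hg.2]⟩
  refine linearIndependent_dualTensor hX (hpar hx₁ hx₂ h₁₂ h₁₂')
    (hpar hx₃ hx₂ (Ne.symm h₂₃) fun h => h₂₃' (by rw [h, neg_neg])) (hpar hx₁ hx₃ h₁₃ h₁₃')
    (hpar hx₂ hx₃ h₂₃ h₂₃') (hne hf₂.1) (hne hf₃.1) ?_
  rintro ⟨h₂, h₃⟩
  obtain ⟨w₂, hw₂, hfw₂⟩ := hsupp hf₂ h₂
  obtain ⟨w₃, hw₃, hfw₃⟩ := hsupp hf₃ h₃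
  rcases eq_or_eq_or_eq_of_mem_extremePoints_of_apply_eq_one hX (ℓ := (f₁ ∘L T : X →ₗ[ℝ] ℝ))
    (hx x₁ (by simp)).2 (hx w₂ (by simp; tauto)).2 (hx w₃ (by simp; tauto)).2 hf₁.2 hfw₂ hfw₃
    with h | h | h <;>
  rcases hw₂ with rfl | rfl <;> rcases hw₃ with rfl | rfl
  exacts [h₁₂ h, h₁₂ h, h₁₂' h, h₁₂' h, h₁₃ h, h₁₃' h, h₁₃ h, h₁₃' h, h₂₃ h, h₂₃' h,
    h₂₃' (neg_eq_iff_eq_neg.1 h), h₂₃ (neg_inj.1 h)]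

end Operators

theorem stmt13 (X Y : Type*) [NormedAddCommGroup X] [NormedSpace ℝ X]
    [NormedAddCommGroup Y] [NormedSpace ℝ Y]
    (hX : Module.finrank ℝ X = 2) (hY : Module.finrank ℝ Y = 2)
    (T : X →L[ℝ] Y) (hT : ‖T‖ = 1)
    (x₁ x₂ x₃ : X)
    (hdist : x₁ ≠ x₂ ∧ x₁ ≠ -x₂ ∧ x₁ ≠ x₃ ∧ x₁ ≠ -x₃ ∧ x₂ ≠ x₃ ∧ x₂ ≠ -x₃)
    (hMT : {v : X | ‖v‖ = 1 ∧ ‖T v‖ = 1} ∩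
        Set.extremePoints ℝ (Metric.closedBall (0 : X) 1)
      = {x₁, -x₁, x₂, -x₂, x₃, -x₃})
    (hsm : ∀ i : Fin 3, ∃! f : Y →L[ℝ] ℝ, ‖f‖ = 1 ∧ f (T (![x₁, x₂, x₃] i)) = 1) :
    Module.finrank ℝ ↥(Submodule.span ℝ
      {F : (X →L[ℝ] Y) →L[ℝ] ℝ | ‖F‖ = 1 ∧ F T = 1}) = 3 := by
  have : FiniteDimensional ℝ X := .of_finrank_eq_succ hX
  have : FiniteDimensional ℝ Y := .of_finrank_eq_succ hY
  have hM (w : X) := Set.ext_iff.1 hMT w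
  simp only [mem_inter_iff, mem_ofPred_eq, mem_insert_iff, mem_singleton_iff] at hM
  choose f hf hfu using hsm
  have hF : (fun i => dualTensor (f i) (![x₁, x₂, x₃] i)) =
      ![dualTensor (f 0) x₁, dualTensor (f 1) x₂, dualTensor (f 2) x₃] := by
    ext i; fin_cases i <;> rfl
  refine (finrank_span_eq_card_of_forall_apply_eq_zero
    (F := fun i => dualTensor (f i) (![x₁, x₂, x₃] i)) ?_ (fun i => ?_) fun G hG S hS =>
      apply_eq_zero_of_dualTensor_apply_eq_zero hT.le hfu ?_ hS hG.1.le hG.2).trans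
    (Fintype.card_fin 3)
  · rw [hF]
    exact linearIndependent_dualTensor_of_mem_extremePoints hX hdist
      (fun w hw => ⟨((hM w).2 hw).1.1, ((hM w).2 hw).2⟩) (hf 0) (hf 1) (hf 2)
  · have hx : ‖![x₁, x₂, x₃] i‖ = 1 := by fin_cases i <;> exact ((hM _).2 (by simp)).1.1
    exact ⟨norm_dualTensor_eq_one hT.le (hf i).1 hx (hf i).2, (hf i).2⟩
  · intro w hw hw1 hTw1
    rcases (hM w).1 ⟨⟨hw1, hTw1⟩, hw⟩ with h | h | h | h | h | h
    exacts [⟨0, .inl h⟩, ⟨0, .inr h⟩, ⟨1, .inl h⟩, ⟨1, .inr h⟩, ⟨2, .inl h⟩, ⟨2, .inr h⟩]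
end

section
/- Let X be an n-dimensional polyhedral real Banach space. If x is an exposed point of the closed unit ball of X, then x is n-smooth, i.e., dim span J(x) = n. -/
/-!
Let `g` expose `x` in the unit ball `convexHull s`, `s` finite. Since `g` is strictly smaller at
the finitely many other vertices, every small perturbation `g + ε h` still attains its maximum
over `s`, hence over the ball, at `x`; normalised, it is a norming functional of `x`. So
`h = ε⁻¹ ((g + ε h) - g)` lies in the span of `J(x)`, which is therefore the whole dual.
-/

open Metric Set Filter Topology

lemma IsMaxOn.convexHull_of_linearMap {E : Type*} [AddCommGroup E] [Module ℝ E]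
    {f : E →ₗ[ℝ] ℝ} {s : Set E} {x : E} (hf : IsMaxOn f s x) :
    IsMaxOn f (convexHull ℝ s) x := by
  intro y hy
  obtain ⟨z, hz, hyz⟩ :=
    (f.convexOn (convex_convexHull ℝ s)).exists_ge_of_mem_convexHull (subset_convexHull ℝ s) hy
  exact hyz.trans (hf hz)

lemma isMaxOn_of_forall_ne_lt {α β : Type*} [Preorder β] {f : α → β} {s : Set α} {x : α}
    (h : ∀ y ∈ s, y ≠ x → f y < f x) : IsMaxOn f s x := fun y hy ↦ by
  rcases eq_or_ne y x with rfl | hyx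
  · exact le_refl (f y)
  · exact (h y hy hyx).le

lemma Set.Finite.eventually_isMaxOn_add_smul {E : Type*} {s : Set E} (hs : s.Finite)
    {g : E → ℝ} {x : E} (hg : ∀ y ∈ s, y ≠ x → g y < g x) (h : E → ℝ) :
    ∀ᶠ ε in 𝓝 (0 : ℝ), IsMaxOn (g + ε • h) s x := by
  have hlt : ∀ y ∈ s \ {x}, ∀ᶠ ε in 𝓝 (0 : ℝ), g y + ε * h y < g x + ε * h x :=
    fun y hy ↦ ContinuousAt.eventually_lt (by fun_prop) (by fun_prop) (by simpa using hg y hy.1 hy.2)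
  filter_upwards [hs.sdiff.eventually_all.2 hlt] with ε hε
  exact isMaxOn_of_forall_ne_lt fun y hy hyx ↦ hε y ⟨hy, hyx⟩

namespace ContinuousLinearMap

variable {E : Type*} [NormedAddCommGroup E] [NormedSpace ℝ E]

lemma norm_eq_one_of_isMaxOn_closedBall {f : E →L[ℝ] ℝ} {x : E} (hx : ‖x‖ = 1)
    (hfx : f x = 1) (hmax : IsMaxOn f (closedBall 0 1) x) : ‖f‖ = 1 := by
  refine le_antisymm (opNorm_le_of_unit_norm zero_le_one fun y hy ↦ ?_) ?_
  · have hball : ∀ z : E, ‖z‖ = 1 → f z ≤ 1 := fun z hz ↦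
      hfx ▸ hmax (mem_closedBall_zero_iff.2 hz.le)
    rw [Real.norm_eq_abs, abs_le]
    exact ⟨by linarith [map_neg f y ▸ hball (-y) (by rwa [norm_neg])], hball y hy⟩
  · simpa [hfx] using f.unit_le_opNorm x hx.le

lemma mem_span_norming_of_isMaxOn_closedBall {f : E →L[ℝ] ℝ} {x : E} (hx : ‖x‖ = 1)
    (hmax : IsMaxOn f (closedBall 0 1) x) (hpos : 0 < f x) :
    f ∈ Submodule.span ℝ {φ : E →L[ℝ] ℝ | ‖φ‖ = 1 ∧ φ x = 1} := by
  have hfx : ((f x)⁻¹ • f) x = 1 := by simp [hpos.ne']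
  have hnorm : ‖(f x)⁻¹ • f‖ = 1 := norm_eq_one_of_isMaxOn_closedBall hx hfx
    fun y hy ↦ by simpa [inv_mul_le_iff₀ hpos, hpos.ne'] using hmax hy
  have : f = f x • ((f x)⁻¹ • f) := by rw [smul_inv_smul₀ hpos.ne']
  rw [this]
  exact Submodule.smul_mem _ _ (Submodule.subset_span ⟨hnorm, hfx⟩)

end ContinuousLinearMap

open ContinuousLinearMap in
lemma span_norming_eq_top_of_exposed {E : Type*} [NormedAddCommGroup E] [NormedSpace ℝ E]
    {s : Set E} (hs : s.Finite) (hball : closedBall (0 : E) 1 = convexHull ℝ s)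
    {x : E} (hx : ‖x‖ = 1) {g : E →L[ℝ] ℝ} (hgx : g x = 1)
    (hg : ∀ y ∈ closedBall (0 : E) 1, y ≠ x → g y < 1) :
    Submodule.span ℝ {φ : E →L[ℝ] ℝ | ‖φ‖ = 1 ∧ φ x = 1} = ⊤ := by
  have hsball : s ⊆ closedBall 0 1 := hball ▸ subset_convexHull ℝ s
  have hgmax : IsMaxOn g (closedBall 0 1) x :=
    isMaxOn_of_forall_ne_lt fun y hy hyx ↦ hgx ▸ hg y hy hyx
  refine Submodule.eq_top_iff'.2 fun h ↦ ?_
  have hpert : ∀ᶠ ε in 𝓝 (0 : ℝ), IsMaxOn (⇑g + ε • ⇑h) s x :=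
    hs.eventually_isMaxOn_add_smul (fun y hy hyx ↦ hgx ▸ hg y (hsball hy) hyx) h
  have hpos : ∀ᶠ ε in 𝓝 (0 : ℝ), 0 < g x + ε * h x :=
    ContinuousAt.eventually_lt (by fun_prop) (by fun_prop) (by simp [hgx])
  obtain ⟨ε, ⟨hεmax, hεpos⟩, hε : 0 < ε⟩ :=
    (((hpert.and hpos).filter_mono nhdsWithin_le_nhds).and
      (self_mem_nhdsWithin (s := Ioi 0))).exists
  have hmax : IsMaxOn (g + ε • h) (closedBall 0 1) x := by
    rw [hball]
    exact IsMaxOn.convexHull_of_linearMap (f := ((g + ε • h : E →L[ℝ] ℝ) : E →ₗ[ℝ] ℝ))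
      hεmax
  have hmem := mem_span_norming_of_isMaxOn_closedBall hx hmax (by simpa using hεpos)
  have hgmem := mem_span_norming_of_isMaxOn_closedBall hx hgmax (by simp [hgx])
  have : h = ε⁻¹ • ((g + ε • h) - g) := by
    rw [add_sub_cancel_left, inv_smul_smul₀ hε.ne']
  rw [this]
  exact Submodule.smul_mem _ _ (Submodule.sub_mem _ hmem hgmem)

theorem stmt16 (X : Type*) [NormedAddCommGroup X] [NormedSpace ℝ X]
    (n : ℕ) (hX : Module.finrank ℝ X = n)
    (hpoly : ∃ s : Finset X, Metric.closedBall (0 : X) 1 = convexHull ℝ (↑s : Set X))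
    (x : X)
    (hexp : ∃ f : X →L[ℝ] ℝ, f x = 1 ∧ ∀ y ∈ Metric.closedBall (0 : X) 1, y ≠ x → f y < 1)
    (hx : ‖x‖ = 1) :
    Module.finrank ℝ ↥(Submodule.span ℝ
      {f : X →L[ℝ] ℝ | ‖f‖ = 1 ∧ f x = 1}) = n := by
  obtain ⟨s, hs⟩ := hpoly
  obtain ⟨g, hgx, hg⟩ := hexp
  have : FiniteDimensional ℝ X := FiniteDimensional.of_isCompact_closedBall₀ ℝ one_pos
    (hs ▸ s.finite_toSet.isCompact_convexHull (𝕜 := ℝ))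
  rw [span_norming_eq_top_of_exposed s.finite_toSet hs hx hgx hg, finrank_top,
    ← LinearMap.toContinuousLinearMap.finrank_eq, Subspace.dual_finrank_eq, hX]
end
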